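/- If s and t are coprime positive integers, then the Smith normal form of X_{st} is the product of the Smith normal forms of X_s and X_t: S(X_{st}) = S(X_s) S(X_t). -/
import Mathlib


open MvPolynomial Finset

noncomputable section

/-- The abstract ring of symmetric functions over `ℚ`, presented as the polynomial
ring in the power sums: the variable `n` stands for the power sum `p_n` (for `n ≥ 1`). -/
abbrev SymFn : Type := MvPolynomial ℕ ℚ

/-- The power sum symmetric function `p_λ` attached to a partition `λ`. -/
def pP {k : ℕ} (lam : k.Partition) : SymFn :=
  (lam.parts.map fun i => (X i : SymFn)).prod

/-- `z` of an exponent vector `d` (where `d i` is the multiplicity of the part `i`). -/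
def zOf (d : ℕ →₀ ℕ) : ℚ := d.prod fun i m => (i : ℚ) ^ m * (Nat.factorial m : ℚ)

/-- The number of parts recorded by an exponent vector. -/
def ellOf (d : ℕ →₀ ℕ) : ℕ := d.sum fun _ m => m

/-- The `s`-form on the ring of symmetric functions, determined by
`⟨p_λ, p_μ⟩_s = δ_{λμ} s^{ℓ(λ)} z_λ`. -/
def sform (s : ℚ) (f g : SymFn) : ℚ :=
  ∑ d ∈ f.support ∪ g.support, coeff d f * coeff d g * s ^ ellOf d * zOf d

/-- `z_λ` for a partition `λ`. -/
def zP {k : ℕ} (lam : k.Partition) : ℚ :=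
  ∏ i ∈ Finset.range (k + 1),
    (i : ℚ) ^ (lam.parts.count i) * (Nat.factorial (lam.parts.count i) : ℚ)

/-- The complete homogeneous symmetric function `h_n`, via its power sum expansion
`h_n = ∑_{λ ⊢ n} z_λ⁻¹ p_λ`. -/
def hP (n : ℕ) : SymFn := ∑ lam : n.Partition, (zP lam)⁻¹ • pP lam

/-- `h_μ = h_{μ₁} h_{μ₂} ⋯` for a partition `μ`. -/
def hProd {k : ℕ} (mu : k.Partition) : SymFn := (mu.parts.map hP).prod

/-- The degree-`k` homogeneous component of the ring of symmetric functions: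
the span of the `p_λ` for `λ ⊢ k`. -/
def degComp (k : ℕ) : Submodule ℚ SymFn :=
  Submodule.span ℚ (Set.range (pP (k := k)))

/-- `D` is a Smith normal form of the square integer matrix `A`: it is diagonal with positive
diagonal entries forming a divisibility chain, and is unimodularly equivalent to `A`. -/
def IsSNFOf {N : ℕ} (D A : Matrix (Fin N) (Fin N) ℤ) : Prop :=
  (∃ U V : Matrix (Fin N) (Fin N) ℤ, IsUnit U.det ∧ IsUnit V.det ∧ D = U * A * V) ∧
    (∀ i j, i ≠ j → D i j = 0) ∧ (∀ i, 0 < D i i) ∧ (∀ i j, i ≤ j → D i i ∣ D j j)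



/-- The exponent vector of a partition. -/
def cnt {k : ℕ} (lam : k.Partition) : ℕ →₀ ℕ := Multiset.toFinsupp lam.parts

lemma prod_X_multiset (s : Multiset ℕ) :
    ((s.map fun i => (X i : SymFn)).prod) = monomial (Multiset.toFinsupp s) 1 := by
  induction s using Multiset.induction with
  | empty => simp [MvPolynomial.monomial_zero']
  | cons a s ih =>
    rw [Multiset.map_cons, Multiset.prod_cons, ih, ← Multiset.singleton_add,
      Multiset.toFinsupp_add, Multiset.toFinsupp_singleton]
    rw [MvPolynomial.X, MvPolynomial.monomial_mul, one_mul]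

lemma pP_eq {k : ℕ} (lam : k.Partition) : pP lam = monomial (cnt lam) 1 :=
  prod_X_multiset lam.parts

lemma cnt_inj {k : ℕ} : Function.Injective (cnt (k := k)) := by
  intro a b h
  exact Nat.Partition.ext (Multiset.toFinsupp.injective h)

/-- exponent vectors of symmetric functions of degree `k`. -/
def OKe (k : ℕ) (e : ℕ →₀ ℕ) : Prop := e 0 = 0 ∧ (e.sum fun i m => m * i) = k

lemma sum_toMultiset (e : ℕ →₀ ℕ) : (Finsupp.toMultiset e).sum = e.sum fun i m => m * i := by
  rw [Finsupp.toMultiset_apply, Finsupp.sum, Finsupp.sum]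
  calc (∑ a ∈ e.support, e a • ({a} : Multiset ℕ)).sum
      = Multiset.sumAddMonoidHom (∑ a ∈ e.support, e a • ({a} : Multiset ℕ)) := rfl
    _ = ∑ a ∈ e.support, Multiset.sumAddMonoidHom (e a • ({a} : Multiset ℕ)) :=
        map_sum _ _ _
    _ = ∑ a ∈ e.support, e a * a := by
        apply Finset.sum_congr rfl
        intro i _
        show (e i • ({i} : Multiset ℕ)).sum = e i * i
        rw [Multiset.nsmul_singleton, Multiset.sum_replicate, smul_eq_mul]

lemma OKe_cnt {k : ℕ} (lam : k.Partition) : OKe k (cnt lam) := by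
  constructor
  · rw [show (cnt lam) 0 = lam.parts.count 0 from rfl, Multiset.count_eq_zero]
    intro h0
    exact absurd (lam.parts_pos h0) (lt_irrefl 0)
  · have h := sum_toMultiset (cnt lam)
    rw [show Finsupp.toMultiset (cnt lam) = lam.parts from
      Multiset.toFinsupp_toMultiset lam.parts] at h
    rw [← h]
    exact lam.parts_sum

lemma exists_partition_of_OKe {k : ℕ} {e : ℕ →₀ ℕ} (h : OKe k e) :
    ∃ lam : k.Partition, cnt lam = e := by
  refine ⟨⟨Finsupp.toMultiset e, ?_, ?_⟩, ?_⟩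
  · intro i hi
    rw [Finsupp.mem_toMultiset] at hi
    rcases Nat.eq_zero_or_pos i with h0 | h0
    · subst h0
      exact absurd h.1 (by simpa [Finsupp.mem_support_iff] using hi)
    · exact h0
  · rw [sum_toMultiset]; exact h.2
  · show Multiset.toFinsupp (Finsupp.toMultiset e) = e
    exact Multiset.toFinsupp.apply_symm_apply e

lemma OKe_add {k l : ℕ} {e1 e2 : ℕ →₀ ℕ} (h1 : OKe k e1) (h2 : OKe l e2) :
    OKe (k + l) (e1 + e2) := by
  constructor
  · simp [Finsupp.add_apply, h1.1, h2.1]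
  · rw [Finsupp.sum_add_index' (fun i => by simp) (fun i m1 m2 => by ring), h1.2, h2.2]

lemma OKe_of_mem_degComp {k : ℕ} {f : SymFn} (hf : f ∈ degComp k) :
    ∀ e ∈ f.support, OKe k e := by
  refine Submodule.span_induction ?_ ?_ ?_ ?_ hf
  · rintro x ⟨lam, rfl⟩ e he
    rw [pP_eq, MvPolynomial.support_monomial] at he
    simp only [one_ne_zero, if_false, Finset.mem_singleton] at he
    subst he
    exact OKe_cnt lam
  · intro e he
    simp at he
  · intro f g _ _ hf hg e he
    rcases Finset.mem_union.mp (MvPolynomial.support_add he) with h | h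
    · exact hf e h
    · exact hg e h
  · intro c f _ hf e he
    exact hf e (MvPolynomial.support_smul he)

lemma OKe_hP (n : ℕ) : ∀ e ∈ (hP n).support, OKe n e := by
  apply OKe_of_mem_degComp
  unfold hP degComp
  apply Submodule.sum_mem
  intro lam _
  exact Submodule.smul_mem _ _ (Submodule.subset_span ⟨lam, rfl⟩)

lemma OKe_hProd_aux (s : Multiset ℕ) :
    ∀ e ∈ ((s.map hP).prod).support, OKe s.sum e := by
  induction s using Multiset.induction with
  | empty =>
    intro e he
    rw [Multiset.map_zero, Multiset.prod_zero] at he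
    have h1 : coeff e (1 : SymFn) ≠ 0 := MvPolynomial.mem_support_iff.mp he
    rw [MvPolynomial.coeff_one] at h1
    have he0 : e = 0 := by
      by_contra hne
      exact h1 (if_neg (fun h => hne h.symm))
    subst he0
    rw [Multiset.sum_zero]
    exact ⟨rfl, by simp⟩
  | cons a s ih =>
    intro e he
    rw [Multiset.map_cons, Multiset.prod_cons] at he
    have := MvPolynomial.support_mul _ _ he
    rw [Finset.mem_add] at this
    obtain ⟨e1, he1, e2, he2, rfl⟩ := this
    rw [Multiset.sum_cons]
    exact OKe_add (OKe_hP a e1 he1) (ih e2 he2)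

lemma OKe_hProd {k : ℕ} (mu : k.Partition) : ∀ e ∈ (hProd mu).support, OKe k e := by
  have := OKe_hProd_aux mu.parts
  rw [mu.parts_sum] at this
  exact this

section Gram

open Matrix

variable {d : ℕ} (m : d.Partition → SymFn)

/-- matrix of coefficients of the `m`'s in the power sum basis -/
def Mm : Matrix (d.Partition) (d.Partition) ℚ :=
  Matrix.of fun a l => coeff (cnt l) (m a)

def Hh : Matrix (d.Partition) (d.Partition) ℚ :=
  Matrix.of fun b l => coeff (cnt l) (hProd b)

def Zd (u : ℚ) : Matrix (d.Partition) (d.Partition) ℚ :=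
  Matrix.diagonal (fun l : d.Partition => u ^ ellOf (cnt l) * zOf (cnt l))

lemma zOf_cnt_pos (lam : d.Partition) : 0 < zOf (cnt lam) := by
  unfold zOf Finsupp.prod
  apply Finset.prod_pos
  intro i hi
  have hpos : 0 < i := by
    apply lam.parts_pos
    rw [← Multiset.count_pos]
    exact Nat.pos_of_ne_zero (Finsupp.mem_support_iff.mp hi)
  positivity

lemma sform_eq_sum (u : ℚ) (f g : SymFn) (hf : ∀ e ∈ f.support, OKe d e)
    (hg : ∀ e ∈ g.support, OKe d e) :
    sform u f g =
      ∑ l : d.Partition,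
        coeff (cnt l) f * coeff (cnt l) g * u ^ ellOf (cnt l) * zOf (cnt l) := by
  unfold sform
  have hsub : (f.support ∪ g.support) ⊆ Finset.image (cnt (k := d)) Finset.univ := by
    intro e he
    have hOK : OKe d e := by
      rcases Finset.mem_union.mp he with h | h
      · exact hf e h
      · exact hg e h
    obtain ⟨lam, rfl⟩ := exists_partition_of_OKe hOK
    exact Finset.mem_image.mpr ⟨lam, Finset.mem_univ _, rfl⟩
  have hzero : ∀ e ∈ Finset.image (cnt (k := d)) Finset.univ, e ∉ f.support ∪ g.support →
      coeff e f * coeff e g * u ^ ellOf e * zOf e = 0 := by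
    intro e _ he
    have h1 : coeff e f = 0 := by
      by_contra hc
      exact he (Finset.mem_union_left _ (MvPolynomial.mem_support_iff.mpr hc))
    rw [h1, zero_mul, zero_mul, zero_mul]
  rw [Finset.sum_subset hsub hzero, Finset.sum_image (fun x _ y _ h => cnt_inj h)]

lemma gram_entry (hm_deg : ∀ a, m a ∈ degComp d) (u : ℚ) (a b : d.Partition) :
    (Mm m * Zd (d := d) u * (Hh (d := d))ᵀ) a b = sform u (m a) (hProd b) := by
  rw [sform_eq_sum u (m a) (hProd b) (OKe_of_mem_degComp (hm_deg a)) (OKe_hProd b)]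
  rw [Matrix.mul_apply]
  apply Finset.sum_congr rfl
  intro l _
  show (Mm m * Matrix.diagonal (fun l : d.Partition => u ^ ellOf (cnt l) * zOf (cnt l))) a l *
    (Hh (d := d))ᵀ l b = _
  rw [Matrix.mul_diagonal]
  show coeff (cnt l) (m a) * (u ^ ellOf (cnt l) * zOf (cnt l)) * coeff (cnt l) (hProd b) = _
  ring

lemma gram_one (hm_deg : ∀ a, m a ∈ degComp d)
    (hm_dual : ∀ a b : d.Partition, sform 1 (m a) (hProd b) = if a = b then 1 else 0) :
    Mm (d := d) m * Zd 1 * (Hh (d := d))ᵀ = 1 := by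
  ext a b
  rw [gram_entry m hm_deg 1 a b, hm_dual a b, Matrix.one_apply]

def Dinv : Matrix (d.Partition) (d.Partition) ℚ :=
  Matrix.diagonal (fun l : d.Partition => (zOf (cnt l))⁻¹)

lemma HhT_Mm (hm_deg : ∀ a, m a ∈ degComp d)
    (hm_dual : ∀ a b : d.Partition, sform 1 (m a) (hProd b) = if a = b then 1 else 0) :
    (Hh (d := d))ᵀ * Mm (d := d) m = Dinv := by
  have h1 : Mm (d := d) m * (Zd 1 * (Hh (d := d))ᵀ) = 1 := by
    rw [← Matrix.mul_assoc]; exact gram_one m hm_deg hm_dual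
  have h2 : (Zd 1 * (Hh (d := d))ᵀ) * Mm (d := d) m = 1 := mul_eq_one_comm.mp h1
  have h3 : Dinv * Zd (d := d) 1 = 1 := by
    unfold Dinv Zd
    rw [Matrix.diagonal_mul_diagonal]
    convert Matrix.diagonal_one using 2
    funext l
    rw [one_pow, one_mul, inv_mul_cancel₀ (zOf_cnt_pos l).ne']
  calc (Hh (d := d))ᵀ * Mm (d := d) m
      = Dinv * (Zd 1 * (Hh (d := d))ᵀ * Mm (d := d) m) := by
        rw [Matrix.mul_assoc (Zd 1), ← Matrix.mul_assoc Dinv, h3, Matrix.one_mul]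
    _ = Dinv := by rw [h2, Matrix.mul_one]

lemma Zd_mul_Dinv_mul_Zd (u v : ℚ) :
    Zd (d := d) u * Dinv * Zd v = Zd (u * v) := by
  unfold Zd Dinv
  rw [Matrix.diagonal_mul_diagonal, Matrix.diagonal_mul_diagonal]
  apply congrArg Matrix.diagonal
  funext l
  rw [mul_pow]
  field_simp [(zOf_cnt_pos l).ne']
  try ring

lemma gram_mul (hm_deg : ∀ a, m a ∈ degComp d)
    (hm_dual : ∀ a b : d.Partition, sform 1 (m a) (hProd b) = if a = b then 1 else 0) (u v : ℚ) :
    (Mm m * Zd u * (Hh (d := d))ᵀ) * (Mm m * Zd v * (Hh (d := d))ᵀ) = Mm (d := d) m * Zd (u * v) * (Hh (d := d))ᵀ := by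
  have h := HhT_Mm m hm_deg hm_dual
  calc (Mm m * Zd u * (Hh (d := d))ᵀ) * (Mm m * Zd v * (Hh (d := d))ᵀ)
      = Mm m * (Zd u * Dinv * Zd v) * (Hh (d := d))ᵀ := by
        rw [← h]
        simp only [Matrix.mul_assoc]
    _ = Mm (d := d) m * Zd (u * v) * (Hh (d := d))ᵀ := by rw [Zd_mul_Dinv_mul_Zd]

lemma gram_det (hm_deg : ∀ a, m a ∈ degComp d)
    (hm_dual : ∀ a b : d.Partition, sform 1 (m a) (hProd b) = if a = b then 1 else 0) (u : ℚ) :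
    (Mm m * Zd u * (Hh (d := d))ᵀ).det = u ^ (∑ l : d.Partition, ellOf (cnt l)) := by
  have hone := congrArg Matrix.det (gram_one m hm_deg hm_dual)
  rw [Matrix.det_mul, Matrix.det_mul, Matrix.det_one] at hone
  rw [Matrix.det_mul, Matrix.det_mul]
  have hZ1 : (Zd (d := d) 1).det = ∏ l : d.Partition, zOf (cnt l) := by
    unfold Zd
    rw [Matrix.det_diagonal]
    simp
  have hZu : (Zd (d := d) u).det =
      u ^ (∑ l : d.Partition, ellOf (cnt l)) * ∏ l : d.Partition, zOf (cnt l) := by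
    unfold Zd
    rw [Matrix.det_diagonal, Finset.prod_mul_distrib, Finset.prod_pow_eq_pow_sum]
  have hZne : (∏ l : d.Partition, zOf (cnt l)) ≠ 0 :=
    (Finset.prod_pos (fun l _ => zOf_cnt_pos l)).ne'
  rw [hZ1] at hone
  rw [hZu]
  calc (Mm m).det * (u ^ (∑ l : d.Partition, ellOf (cnt l)) * ∏ l : d.Partition, zOf (cnt l)) *
        ((Hh (d := d))ᵀ).det
      = u ^ (∑ l : d.Partition, ellOf (cnt l)) *
        ((Mm m).det * (∏ l : d.Partition, zOf (cnt l)) * ((Hh (d := d))ᵀ).det) := by ring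
    _ = u ^ (∑ l : d.Partition, ellOf (cnt l)) := by rw [hone, mul_one]

end Gram

section PartB

open Matrix

variable {N : ℕ}
/-- gcd of all k×k minors (indexed by arbitrary row/column selection functions). -/
def dd (k : ℕ) (A : Matrix (Fin N) (Fin N) ℤ) : ℤ :=
  Finset.gcd Finset.univ
    (fun rc : (Fin k → Fin N) × (Fin k → Fin N) => (A.submatrix rc.1 rc.2).det)

lemma dd_dvd (k : ℕ) (A : Matrix (Fin N) (Fin N) ℤ) (r c : Fin k → Fin N) :
    dd k A ∣ (A.submatrix r c).det :=
  Finset.gcd_dvd (Finset.mem_univ (r, c))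

lemma dvd_dd {k : ℕ} {A : Matrix (Fin N) (Fin N) ℤ} {x : ℤ}
    (h : ∀ r c : Fin k → Fin N, x ∣ (A.submatrix r c).det) : x ∣ dd k A :=
  Finset.dvd_gcd (fun rc _ => h rc.1 rc.2)

lemma dd_nonneg (k : ℕ) (A : Matrix (Fin N) (Fin N) ℤ) : 0 ≤ dd k A := by
  have h := Finset.normalize_gcd (s := (Finset.univ : Finset ((Fin k → Fin N) × (Fin k → Fin N))))
    (f := fun rc => (A.submatrix rc.1 rc.2).det)
  rw [← Int.abs_eq_normalize] at h
  unfold dd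
  rw [← h]
  exact abs_nonneg _

/-- Half of Cauchy–Binet: expansion of det of a product of rectangular matrices. -/
lemma det_mul_rect (k : ℕ) (P : Matrix (Fin k) (Fin N) ℤ) (Q : Matrix (Fin N) (Fin k) ℤ) :
    (P * Q).det = ∑ r : Fin k → Fin N, (∏ i, P i (r i)) * (Q.submatrix r id).det := by
  let f := (Matrix.detRowAlternating (R := ℤ) (n := Fin k)).toMultilinearMap
  have hrows : ((P * Q) : Matrix (Fin k) (Fin k) ℤ) =
      (fun i => ∑ j : Fin N, P i j • (Q j) : Fin k → Fin k → ℤ) := by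
    funext i j'
    simp [Matrix.mul_apply, Finset.sum_apply]
  have e1 : (P * Q).det = f ((P * Q) : Matrix (Fin k) (Fin k) ℤ) := rfl
  rw [e1, hrows, f.map_sum (g := fun i j => P i j • (Q j))]
  apply Finset.sum_congr rfl
  intro r _
  rw [f.map_smul_univ (fun i => P i (r i)) (fun i => Q (r i))]
  have e2 : f (fun i => Q (r i)) = (Q.submatrix r id).det := rfl
  rw [e2, smul_eq_mul]

lemma dd_dvd_mul_right (k : ℕ) (A B : Matrix (Fin N) (Fin N) ℤ) :
    dd k B ∣ dd k (A * B) := by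
  apply dvd_dd
  intro r c
  rw [← Matrix.submatrix_mul_equiv A B r (Equiv.refl (Fin N)) c, det_mul_rect]
  apply Finset.dvd_sum
  intro g _
  exact Dvd.dvd.mul_left (by simpa using dd_dvd k B g c) _

lemma dd_transpose (k : ℕ) (A : Matrix (Fin N) (Fin N) ℤ) : dd k Aᵀ = dd k A := by
  have h : ∀ (X : Matrix (Fin N) (Fin N) ℤ), dd k Xᵀ ∣ dd k X := by
    intro X
    apply dvd_dd
    intro r c
    have : (X.submatrix r c) = ((Xᵀ).submatrix c r)ᵀ := by ext i j; rfl
    rw [this, Matrix.det_transpose]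
    exact dd_dvd k Xᵀ c r
  have h2 := h Aᵀ
  rw [Matrix.transpose_transpose] at h2
  exact Int.dvd_antisymm (dd_nonneg _ _) (dd_nonneg _ _) (h A) h2

lemma dd_dvd_mul_left (k : ℕ) (A B : Matrix (Fin N) (Fin N) ℤ) :
    dd k A ∣ dd k (A * B) := by
  rw [← dd_transpose k A, ← dd_transpose k (A * B), Matrix.transpose_mul]
  exact dd_dvd_mul_right k Bᵀ Aᵀ

lemma dd_smul_dvd (k : ℕ) (z : ℤ) (A : Matrix (Fin N) (Fin N) ℤ) :
    dd k (z • A) ∣ z ^ k * dd k A := by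
  have h : dd k (z • A) = normalize (z ^ k) * dd k A := by
    unfold dd
    rw [← Finset.gcd_mul_left]
    apply Finset.gcd_congr rfl
    intro rc _
    have hz : (z • A).submatrix rc.1 rc.2 = z • (A.submatrix rc.1 rc.2) := by
      ext i j
      simp only [Matrix.smul_apply, Matrix.submatrix_apply]
    rw [hz, Matrix.det_smul]
    simp
  rw [h]
  exact mul_dvd_mul (normalize_dvd_iff.mpr dvd_rfl) dvd_rfl

lemma dd_unit_left (k : ℕ) {U : Matrix (Fin N) (Fin N) ℤ} (hU : IsUnit U.det)
    (A : Matrix (Fin N) (Fin N) ℤ) : dd k (U * A) = dd k A := by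
  obtain ⟨u, hu⟩ := (Matrix.isUnit_iff_isUnit_det U).mpr hU
  apply Int.dvd_antisymm (dd_nonneg _ _) (dd_nonneg _ _)
  · have hA : (↑u⁻¹ : Matrix (Fin N) (Fin N) ℤ) * (U * A) = A := by
      rw [← Matrix.mul_assoc, ← hu, ← Units.val_mul, inv_mul_cancel, Units.val_one,
        Matrix.one_mul]
    have := dd_dvd_mul_right k (↑u⁻¹ : Matrix (Fin N) (Fin N) ℤ) (U * A)
    rwa [hA] at this
  · exact dd_dvd_mul_right k U A

lemma dd_unit_right (k : ℕ) {V : Matrix (Fin N) (Fin N) ℤ} (hV : IsUnit V.det)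
    (A : Matrix (Fin N) (Fin N) ℤ) : dd k (A * V) = dd k A := by
  obtain ⟨v, hv⟩ := (Matrix.isUnit_iff_isUnit_det V).mpr hV
  apply Int.dvd_antisymm (dd_nonneg _ _) (dd_nonneg _ _)
  · have hA : (A * V) * (↑v⁻¹ : Matrix (Fin N) (Fin N) ℤ) = A := by
      rw [Matrix.mul_assoc, ← hv, ← Units.val_mul, mul_inv_cancel, Units.val_one,
        Matrix.mul_one]
    have := dd_dvd_mul_left k (A * V) (↑v⁻¹ : Matrix (Fin N) (Fin N) ℤ)
    rwa [hA] at this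
  · exact dd_dvd_mul_left k A V


lemma strictMono_le_apply {k : ℕ} {g : Fin k → Fin N} (hg : StrictMono g) (i : Fin k) :
    (i : ℕ) ≤ (g i : ℕ) := by
  suffices h : ∀ n : ℕ, ∀ i : Fin k, i.val = n → n ≤ (g i).val by exact h i.val i rfl
  intro n
  induction n with
  | zero => intro i _; exact Nat.zero_le _
  | succ m ih =>
    intro i hi
    have hm : m < k := by omega
    have hv : ((⟨m, hm⟩ : Fin k) : ℕ) = m := rfl
    have hlt : (⟨m, hm⟩ : Fin k) < i := by rw [Fin.lt_def]; omega
    have h1 := ih ⟨m, hm⟩ rfl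
    have h2 := hg hlt
    rw [Fin.lt_def] at h2
    omega

lemma prod_diag_dvd_prod_comp {D : Matrix (Fin N) (Fin N) ℤ}
    (hchain : ∀ i j : Fin N, i ≤ j → D i i ∣ D j j) {k : ℕ} (h : k ≤ N)
    {c : Fin k → Fin N} (hc : Function.Injective c) :
    (∏ i : Fin k, D (Fin.castLE h i) (Fin.castLE h i)) ∣ ∏ i : Fin k, D (c i) (c i) := by
  set σ := Tuple.sort c with hσ
  have hmono : Monotone (c ∘ σ) := Tuple.monotone_sort c
  have hinj : Function.Injective (c ∘ σ) := hc.comp σ.injective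
  have hsm : StrictMono (c ∘ σ) := hmono.strictMono_of_injective hinj
  have key : (∏ i : Fin k, D (Fin.castLE h i) (Fin.castLE h i)) ∣
      ∏ i : Fin k, D ((c ∘ σ) i) ((c ∘ σ) i) := by
    apply Finset.prod_dvd_prod_of_dvd
    intro i _
    apply hchain
    rw [Fin.le_def]
    exact strictMono_le_apply hsm i
  calc (∏ i : Fin k, D (Fin.castLE h i) (Fin.castLE h i))
      ∣ ∏ i : Fin k, D ((c ∘ σ) i) ((c ∘ σ) i) := key
    _ = ∏ i : Fin k, D (c i) (c i) := by
        simpa [Function.comp] using Equiv.prod_comp σ (fun i => D (c i) (c i))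

lemma submatrix_inj_eq_diagonal {D : Matrix (Fin N) (Fin N) ℤ}
    (hdiag : ∀ i j : Fin N, i ≠ j → D i j = 0) {k : ℕ} {c : Fin k → Fin N}
    (hc : Function.Injective c) :
    D.submatrix c c = Matrix.diagonal (fun i => D (c i) (c i)) := by
  ext i j
  by_cases hij : i = j
  · subst hij; simp
  · rw [Matrix.diagonal_apply_ne _ hij, Matrix.submatrix_apply,
      hdiag _ _ (fun hcc => hij (hc hcc))]

lemma prod_diag_dvd_minor {D : Matrix (Fin N) (Fin N) ℤ}
    (hdiag : ∀ i j : Fin N, i ≠ j → D i j = 0)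
    (hchain : ∀ i j : Fin N, i ≤ j → D i i ∣ D j j) {k : ℕ} (h : k ≤ N)
    (r c : Fin k → Fin N) :
    (∏ i : Fin k, D (Fin.castLE h i) (Fin.castLE h i)) ∣ (D.submatrix r c).det := by
  by_cases hr : Function.Injective r
  · by_cases hc : Function.Injective c
    · by_cases hsub : ∀ i, ∃ j, r i = c j
      · choose σf hσf using hsub
        have hσinj : Function.Injective σf := by
          intro i j hij
          apply hr
          rw [hσf i, hσf j, hij]
        have hσbij : Function.Bijective σf := (Finite.injective_iff_bijective).mp hσinj
        set σ : Equiv.Perm (Fin k) := Equiv.ofBijective σf hσbij with hσdef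
        have hsm : D.submatrix r c = (D.submatrix c c).submatrix σ id := by
          ext i j
          simp only [Matrix.submatrix_apply, id_eq]
          rw [hσf i]
          rfl
        rw [hsm, Matrix.det_permute, submatrix_inj_eq_diagonal hdiag hc,
          Matrix.det_diagonal]
        exact Dvd.dvd.mul_left (prod_diag_dvd_prod_comp hchain h hc) _
      · push_neg at hsub
        obtain ⟨i, hi⟩ := hsub
        rw [Matrix.det_eq_zero_of_row_eq_zero i (fun j => hdiag _ _ (hi j))]
        exact dvd_zero _
    · rw [Function.not_injective_iff] at hc
      obtain ⟨i, j, hij, hne⟩ := hc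
      rw [Matrix.det_zero_of_column_eq hne (fun x => by
        simp only [Matrix.submatrix_apply, hij])]
      exact dvd_zero _
  · rw [Function.not_injective_iff] at hr
    obtain ⟨i, j, hij, hne⟩ := hr
    rw [Matrix.det_zero_of_row_eq hne (by
      funext x
      simp only [Matrix.submatrix_apply, hij])]
    exact dvd_zero _

lemma prod_diag_pos {D : Matrix (Fin N) (Fin N) ℤ} (hpos : ∀ i, 0 < D i i) {k : ℕ}
    (h : k ≤ N) : 0 < ∏ i : Fin k, D (Fin.castLE h i) (Fin.castLE h i) :=
  Finset.prod_pos (fun i _ => hpos _)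

lemma dd_diag {D : Matrix (Fin N) (Fin N) ℤ}
    (hdiag : ∀ i j : Fin N, i ≠ j → D i j = 0)
    (hpos : ∀ i, 0 < D i i)
    (hchain : ∀ i j : Fin N, i ≤ j → D i i ∣ D j j) {k : ℕ} (h : k ≤ N) :
    dd k D = ∏ i : Fin k, D (Fin.castLE h i) (Fin.castLE h i) := by
  apply Int.dvd_antisymm (dd_nonneg _ _) (le_of_lt (prod_diag_pos hpos h))
  · have h1 := dd_dvd k D (Fin.castLE h) (Fin.castLE h)
    rwa [submatrix_inj_eq_diagonal hdiag (Fin.castLE_injective h), Matrix.det_diagonal] at h1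
  · exact dvd_dd (prod_diag_dvd_minor hdiag hchain h)

lemma dd_of_snf {D A : Matrix (Fin N) (Fin N) ℤ} (hD : IsSNFOf D A) {k : ℕ} (h : k ≤ N) :
    dd k A = ∏ i : Fin k, D (Fin.castLE h i) (Fin.castLE h i) := by
  obtain ⟨⟨U, V, hU, hV, rfl⟩, hdiag, hpos, hchain⟩ := hD
  rw [← dd_diag hdiag hpos hchain h, Matrix.mul_assoc, dd_unit_left _ hU, dd_unit_right _ hV]

lemma int_dvd_of_dvd_unit_mul {x y u : ℤ} (hu : IsUnit u) (h : x ∣ u * y) : x ∣ y := by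
  obtain ⟨w, rfl⟩ := hu
  have h2 : x ∣ (↑w⁻¹ : ℤ) * (↑w * y) := Dvd.dvd.mul_left h _
  rwa [← mul_assoc, ← Units.val_mul, inv_mul_cancel, Units.val_one, one_mul] at h2

lemma det_snf {D A : Matrix (Fin N) (Fin N) ℤ} (hD : IsSNFOf D A) :
    ∃ u : ℤ, IsUnit u ∧ D.det = u * A.det := by
  obtain ⟨⟨U, V, hU, hV, rfl⟩, hdiag, hpos, hchain⟩ := hD
  exact ⟨U.det * V.det, hU.mul hV, by rw [Matrix.det_mul, Matrix.det_mul]; ring⟩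

lemma det_diag_eq {D : Matrix (Fin N) (Fin N) ℤ} (hdiag : ∀ i j : Fin N, i ≠ j → D i j = 0) :
    D.det = ∏ i, D i i := by
  have : D = Matrix.diagonal (fun i => D i i) := by
    ext i j
    by_cases hij : i = j
    · subst hij; simp
    · rw [Matrix.diagonal_apply_ne _ hij, hdiag _ _ hij]
  rw [this, Matrix.det_diagonal]
  simp

lemma dd_dvd_det {D A : Matrix (Fin N) (Fin N) ℤ} (hD : IsSNFOf D A) {k : ℕ} (h : k ≤ N) :
    dd k A ∣ A.det := by
  obtain ⟨u, hu, hdet⟩ := det_snf hD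
  have hdd := dd_of_snf hD h
  have h1 : dd k A ∣ D.det := by
    rw [hdd, det_diag_eq hD.2.1]
    have : (∏ i : Fin k, D (Fin.castLE h i) (Fin.castLE h i)) =
        ∏ i ∈ Finset.univ.map (Fin.castLEEmb h), D i i := by
      rw [Finset.prod_map]
      rfl
    rw [this]
    exact Finset.prod_dvd_prod_of_subset _ _ _ (Finset.subset_univ _)
  rw [hdet] at h1
  exact int_dvd_of_dvd_unit_mul hu h1

lemma dd_pos_of_snf {D A : Matrix (Fin N) (Fin N) ℤ} (hD : IsSNFOf D A) {k : ℕ} (h : k ≤ N) :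
    0 < dd k A := by
  rw [dd_of_snf hD h]
  exact prod_diag_pos hD.2.2.1 h

lemma dd_mul_eq {A B : Matrix (Fin N) (Fin N) ℤ} (hco : IsCoprime A.det B.det)
    {D1 D2 D3 : Matrix (Fin N) (Fin N) ℤ}
    (h1 : IsSNFOf D1 A) (h2 : IsSNFOf D2 B) (h3 : IsSNFOf D3 (A * B)) {k : ℕ} (h : k ≤ N) :
    dd k (A * B) = dd k A * dd k B := by
  have copk : IsCoprime (dd k A) (dd k B) :=
    (hco.of_isCoprime_of_dvd_left (dd_dvd_det h1 h)).of_isCoprime_of_dvd_right (dd_dvd_det h2 h)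
  apply Int.dvd_antisymm (dd_nonneg _ _)
    (mul_nonneg (dd_nonneg _ _) (dd_nonneg _ _))
  · -- dd k (A*B) ∣ dd k A * dd k B
    have hAB_det : dd k (A * B) ∣ A.det * B.det := by
      have := dd_dvd_det h3 h
      rwa [Matrix.det_mul] at this
    obtain ⟨g1, g2, hg1, hg2, hg⟩ := exists_dvd_and_dvd_of_dvd_mul hAB_det
    have hright : dd k (A * B) ∣ B.det ^ k * dd k A := by
      have hstep : dd k (A * B) ∣ dd k (B.det • A) := by
        have := dd_dvd_mul_left k (A * B) B.adjugate
        rwa [Matrix.mul_assoc, Matrix.mul_adjugate, Matrix.mul_smul, Matrix.mul_one] at this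
      exact hstep.trans (dd_smul_dvd k B.det A)
    have hleft : dd k (A * B) ∣ A.det ^ k * dd k B := by
      have hstep : dd k (A * B) ∣ dd k (A.det • B) := by
        have := dd_dvd_mul_right k A.adjugate (A * B)
        rwa [← Matrix.mul_assoc, Matrix.adjugate_mul, Matrix.smul_mul, Matrix.one_mul] at this
      exact hstep.trans (dd_smul_dvd k A.det B)
    have hg1dvd : g1 ∣ dd k A := by
      have cop1 : IsCoprime g1 (B.det ^ k) :=
        (hco.of_isCoprime_of_dvd_left hg1).pow_right
      exact cop1.dvd_of_dvd_mul_left ((dvd_trans ⟨g2, hg⟩ hright))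
    have hg2dvd : g2 ∣ dd k B := by
      have cop2 : IsCoprime g2 (A.det ^ k) :=
        (hco.symm.of_isCoprime_of_dvd_left hg2).pow_right
      exact cop2.dvd_of_dvd_mul_left ((dvd_trans ⟨g1, by rw [hg, mul_comm]⟩ hleft))
    rw [hg]
    exact mul_dvd_mul hg1dvd hg2dvd
  · exact copk.mul_dvd (dd_dvd_mul_left k A B) (dd_dvd_mul_right k A B)

lemma prod_castLE_succ (f : Fin N → ℤ) {k : ℕ} (hk1 : k + 1 ≤ N) :
    ∏ i : Fin (k + 1), f (Fin.castLE hk1 i) =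
      (∏ i : Fin k, f (Fin.castLE (Nat.le_of_succ_le hk1) i)) * f ⟨k, hk1⟩ := by
  rw [Fin.prod_univ_castSucc]
  rfl

theorem snf_mul {A B D1 D2 D3 : Matrix (Fin N) (Fin N) ℤ} (hco : IsCoprime A.det B.det)
    (h1 : IsSNFOf D1 A) (h2 : IsSNFOf D2 B) (h3 : IsSNFOf D3 (A * B)) : D3 = D1 * D2 := by
  have hdiagentry : ∀ i : Fin N, D3 i i = D1 i i * D2 i i := by
    intro i
    have hk1 : i.val + 1 ≤ N := i.isLt
    have hk : i.val ≤ N := Nat.le_of_succ_le hk1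
    have e1 := dd_mul_eq hco h1 h2 h3 hk
    have e2 := dd_mul_eq hco h1 h2 h3 hk1
    have hi : (⟨i.val, hk1⟩ : Fin N) = i := rfl
    rw [dd_of_snf h3 hk1, dd_of_snf h1 hk1, dd_of_snf h2 hk1,
      prod_castLE_succ (fun x => D3 x x) hk1, prod_castLE_succ (fun x => D1 x x) hk1,
      prod_castLE_succ (fun x => D2 x x) hk1, hi,
      ← dd_of_snf h3 hk, ← dd_of_snf h1 hk, ← dd_of_snf h2 hk, e1] at e2
    have hne : dd i.val A * dd i.val B ≠ 0 :=
      (mul_pos (dd_pos_of_snf h1 hk) (dd_pos_of_snf h2 hk)).ne'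
    have : (dd i.val A * dd i.val B) * D3 i i =
        (dd i.val A * dd i.val B) * (D1 i i * D2 i i) := by
      rw [e2]; ring
    exact mul_left_cancel₀ hne this
  ext i j
  by_cases hij : i = j
  · subst hij
    rw [Matrix.mul_apply, Finset.sum_eq_single i (fun b _ hb => by
        rw [h1.2.1 i b (Ne.symm hb), zero_mul]) (fun h => absurd (Finset.mem_univ i) h)]
    exact hdiagentry i
  · rw [h3.2.1 i j hij, Matrix.mul_apply, Finset.sum_eq_zero]
    intro b _
    by_cases hb : i = b
    · subst hb
      rw [h2.2.1 i j hij, mul_zero]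
    · rw [h1.2.1 i b hb, zero_mul]

end PartB

/-- If `s` and `t` are coprime positive integers, then the Smith normal form
of `X_{st}` is the product of the Smith normal forms of `X_s` and `X_t`:
`S(X_{st}) = S(X_s) S(X_t)`.  Here `XZ u` is the integer Gram matrix of the `u`-form
`(⟨m_λ, h_μ⟩_u)_{λ,μ ⊢ d}` on the degree-`d` component of `Λ`. -/
theorem snf_gram_mul (d : ℕ) (m : d.Partition → SymFn)
    (hm_deg : ∀ a, m a ∈ degComp d)
    (hm_dual : ∀ a b : d.Partition, sform 1 (m a) (hProd b) = if a = b then 1 else 0)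
    (XZ : ℕ → Matrix (d.Partition) (d.Partition) ℤ)
    (hXZ : ∀ (u : ℕ) (a b : d.Partition), ((XZ u a b : ℤ) : ℚ) = sform (u : ℚ) (m a) (hProd b))
    (s t : ℕ) (hs : 0 < s) (ht : 0 < t) (hst : Nat.Coprime s t)
    {N : ℕ} (e : d.Partition ≃ Fin N)
    (D1 D2 D3 : Matrix (Fin N) (Fin N) ℤ)
    (h1 : IsSNFOf D1 (Matrix.reindex e e (XZ s)))
    (h2 : IsSNFOf D2 (Matrix.reindex e e (XZ t)))
    (h3 : IsSNFOf D3 (Matrix.reindex e e (XZ (s * t)))) :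
    D3 = D1 * D2 := by
  classical
  -- cast matrices to ℚ and identify with the Gram product form
  set φ := Int.castRingHom ℚ with hφ
  have hmap : ∀ u : ℕ, (XZ u).map (φ) = Mm m * Zd (d := d) (u : ℚ) * (Hh (d := d)).transpose := by
    intro u
    ext a b
    rw [Matrix.map_apply, gram_entry m hm_deg (u : ℚ) a b]
    exact hXZ u a b
  have hmul : ∀ u v : ℕ, XZ u * XZ v = XZ (u * v) := by
    intro u v
    have hcast : (XZ u * XZ v).map (φ) = (XZ (u * v)).map (φ) := by
      rw [Matrix.map_mul, hmap, hmap, hmap, gram_mul m hm_deg hm_dual]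
      rw [Nat.cast_mul]
    ext a b
    have h := congrFun (congrFun hcast a) b
    simp only [Matrix.map_apply] at h
    exact Int.cast_injective (α := ℚ) h
  have hdet : ∀ u : ℕ, (XZ u).det = (u : ℤ) ^ (∑ l : d.Partition, ellOf (cnt l)) := by
    intro u
    have h1 : ((XZ u).det : ℚ) = ((XZ u).map (φ)).det := (RingHom.map_det φ (XZ u))
    rw [hmap, gram_det m hm_deg hm_dual] at h1
    exact_mod_cast h1
  have hAB : Matrix.reindex e e (XZ s) * Matrix.reindex e e (XZ t) =
      Matrix.reindex e e (XZ (s * t)) := by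
    rw [← hmul s t]
    simp [Matrix.reindex_apply]
  have hco : IsCoprime (Matrix.reindex e e (XZ s)).det (Matrix.reindex e e (XZ t)).det := by
    rw [Matrix.det_reindex_self, Matrix.det_reindex_self, hdet s, hdet t]
    exact (Nat.isCoprime_iff_coprime.mpr hst).pow
  have h3' : IsSNFOf D3 (Matrix.reindex e e (XZ s) * Matrix.reindex e e (XZ t)) := by
    rw [hAB]; exact h3
  exact snf_mul hco h1 h2 h3'
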